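/- Sandwich estimate for the second iterate, stochastic case (inequality (3.23)). Define v₀(x,t) := ξ − β and v_{m+1}(x,t) := ∫₀ᵗ ∫_X K(x,y;t−s) h(y,s) G(v_m(y,s) + g(y,s)) dμ(y) ds. Then there exists σ* ∈ (0,1) such that σ* v₁(x,t) ≤ v₂(x,t) ≤ v₁(x,t) for a.e. x ∈ X and a.e. t > 0. -/

import Mathlib

/-!
Since `V 0 = ξ - β = G ξ` and `g ≤ β`, the source `h G(V 0 + g)` of `V 1` is at most `p₂ G ξ`;
as `K` is stochastic and `∫ p₂ = 1`, this gives `V 1 ≤ G ξ = V 0`, and monotonicity of `G`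
turns it into `V 2 ≤ V 1`. Conversely `V 1 + g ≥ D > 0` on `t > 0`: before `T₀` because
`g ≥ β₀`, after `T₀` because the times in `(0, T₀)`, where `h ≥ p₁ > 0` and `g ≥ β₀`, already
contribute a fixed positive amount to `V 1`. Hence `G (V 1 + g) ≥ G D ≥ σ G ξ ≥ σ G (V 0 + g)`
with `σ = G D / G ξ`, and integrating against the kernel gives `σ V 1 ≤ V 2`.
-/

open MeasureTheory Set Filter

section AeProd

variable {α β : Type*} [MeasurableSpace α] [MeasurableSpace β] {μ : Measure α} {ν : Measure β}
  [SFinite ν]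

lemma ae_ae_swap_of_ae_prod [SFinite μ] {p : α × β → Prop} (h : ∀ᵐ q ∂μ.prod ν, p q) :
    ∀ᵐ y ∂ν, ∀ᵐ x ∂μ, p (x, y) :=
  Measure.ae_ae_of_ae_prod
    ((Measure.measurePreserving_swap (μ := ν) (ν := μ)).quasiMeasurePreserving.ae h)

lemma ae_prod_le_of_ae_ae {u v : α × β → ℝ} (hu : AEMeasurable u (μ.prod ν))
    (hv : AEMeasurable v (μ.prod ν)) (h : ∀ᵐ x ∂μ, ∀ᵐ y ∂ν, u (x, y) ≤ v (x, y)) :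
    ∀ᵐ q ∂μ.prod ν, u q ≤ v q := by
  have hmk : ∀ᵐ x ∂μ, ∀ᵐ y ∂ν, hu.mk u (x, y) ≤ hv.mk v (x, y) := by
    filter_upwards [h, Measure.ae_ae_of_ae_prod hu.ae_eq_mk, Measure.ae_ae_of_ae_prod hv.ae_eq_mk]
      with x hx hux hvx
    filter_upwards [hx, hux, hvx] with y hy huy hvy
    rwa [← huy, ← hvy]
  filter_upwards [(Measure.ae_prod_iff_ae_ae
    (measurableSet_le hu.measurable_mk hv.measurable_mk)).2 hmk, hu.ae_eq_mk, hv.ae_eq_mk]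
    with q hq huq hvq
  rwa [huq, hvq]

lemma ae_ae_comm_of_mem_Icc [SFinite μ] {a b : β → ℝ} {u : α → β → ℝ} (ha : AEMeasurable a ν)
    (hb : AEMeasurable b ν) (hu : Measurable fun q : α × β => u q.1 q.2)
    (h : ∀ᵐ x ∂μ, ∀ᵐ y ∂ν, u x y ∈ Icc (a y) (b y)) :
    ∀ᵐ y ∂ν, ∀ᵐ x ∂μ, u x y ∈ Icc (a y) (b y) := by
  have ha' := ha.comp_quasiMeasurePreserving (Measure.quasiMeasurePreserving_snd (μ := μ))
  have hb' := hb.comp_quasiMeasurePreserving (Measure.quasiMeasurePreserving_snd (μ := μ))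
  exact ae_ae_swap_of_ae_prod (p := fun q => u q.1 q.2 ∈ Icc (a q.2) (b q.2))
    ((ae_prod_le_of_ae_ae ha' hu.aemeasurable (h.mono fun x hx => hx.mono fun y hy => hy.1)).and
      (ae_prod_le_of_ae_ae hu.aemeasurable hb' (h.mono fun x hx => hx.mono fun y hy => hy.2)))

end AeProd

lemma ae_le_toReal_eLpNorm_top {α : Type*} [MeasurableSpace α] {μ : Measure α} {f : α → ℝ}
    (hf : MemLp f ⊤ μ) : ∀ᵐ x ∂μ, f x ≤ (eLpNorm f ⊤ μ).toReal := by
  filter_upwards [ae_le_eLpNormEssSup (f := f) (μ := μ)] with x hx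
  rw [eLpNorm_exponent_top]
  calc f x ≤ ‖f x‖ := le_abs_self _
    _ = (‖f x‖ₑ).toReal := by simp
    _ ≤ _ := ENNReal.toReal_mono (by simpa [eLpNorm_exponent_top] using hf.eLpNorm_ne_top) hx

lemma ae_restrict_Ioc_sub_of_ae_restrict_Ioi {P : ℝ → Prop}
    (h : ∀ᵐ τ ∂volume.restrict (Ioi 0), P τ) (t : ℝ) :
    ∀ᵐ s ∂volume.restrict (Ioc 0 t), P (t - s) := by
  have hpos : ∀ᵐ s, 0 < t - s → P (t - s) :=
    (Measure.measurePreserving_sub_left volume t).quasiMeasurePreserving.ae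
      ((ae_restrict_iff' measurableSet_Ioi).1 h)
  have hne : ∀ᵐ s ∂(volume : Measure ℝ), s ≠ t := by simp [ae_iff, measure_singleton]
  rw [ae_restrict_iff' measurableSet_Ioc]
  filter_upwards [hpos, hne] with s hs hst hmem
  exact hs (sub_pos.2 (lt_of_le_of_ne hmem.2 hst))

lemma MonotoneOn.measurable_comp_of_nonneg {α : Type*} [MeasurableSpace α] {G : ℝ → ℝ}
    (hG : MonotoneOn G (Ici 0)) {f : α → ℝ} (hf : Measurable f) (hf0 : ∀ a, 0 ≤ f a) :
    Measurable fun a => G (f a) := by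
  have hmono : Monotone fun u => G (max u 0) := fun u v huv =>
    hG (le_max_right u 0) (le_max_right v 0) (max_le_max huv le_rfl)
  have hcomp : (fun a => G (f a)) = (fun u => G (max u 0)) ∘ f :=
    funext fun a => by simp [max_eq_left (hf0 a)]
  exact hcomp ▸ hmono.measurable.comp hf

lemma setIntegral_Ioo_pos_of_continuousOn {p : ℝ → ℝ} {a b : ℝ} (hab : a < b)
    (hp : ContinuousOn p (Icc a b)) (hpos : ∀ s ∈ Ioo a b, 0 < p s) :
    0 < ∫ s in Ioo a b, p s := by
  rw [← integral_Ioc_eq_integral_Ioo, ← intervalIntegral.integral_of_le hab.le]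
  exact intervalIntegral.intervalIntegral_pos_of_pos_on
    (hp.intervalIntegrable_of_Icc hab.le) hpos hab

section ProbabilityDensity

variable {X : Type*} [MeasurableSpace X] {μ : Measure X} {k φ : X → ℝ}

lemma integrable_mul_of_integral_eq_one (hk : ∫ y, k y ∂μ = 1) (hφ : AEStronglyMeasurable φ μ)
    (hφ0 : ∀ y, 0 ≤ φ y) {b : ℝ} (hφb : ∀ᵐ y ∂μ, φ y ≤ b) :
    Integrable (fun y => k y * φ y) μ :=
  (Integrable.of_integral_ne_zero (by simp [hk])).mul_bdd hφ <| by
    filter_upwards [hφb] with y hy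
    rwa [Real.norm_of_nonneg (hφ0 y)]

lemma integral_mul_le_of_integral_eq_one (hk0 : ∀ y, 0 ≤ k y) (hk : ∫ y, k y ∂μ = 1)
    (hint : Integrable (fun y => k y * φ y) μ) {b : ℝ} (hφb : ∀ᵐ y ∂μ, φ y ≤ b) :
    ∫ y, k y * φ y ∂μ ≤ b := by
  have hki : Integrable k μ := Integrable.of_integral_ne_zero (by simp [hk])
  calc ∫ y, k y * φ y ∂μ ≤ ∫ y, k y * b ∂μ :=
        integral_mono_ae hint (hki.mul_const b) <| by
          filter_upwards [hφb] with y hy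
          exact mul_le_mul_of_nonneg_left hy (hk0 y)
    _ = b := by rw [integral_mul_const, hk, one_mul]

lemma le_integral_mul_of_integral_eq_one (hk0 : ∀ y, 0 ≤ k y) (hk : ∫ y, k y ∂μ = 1)
    (hint : Integrable (fun y => k y * φ y) μ) {a : ℝ} (hφa : ∀ᵐ y ∂μ, a ≤ φ y) :
    a ≤ ∫ y, k y * φ y ∂μ := by
  have hki : Integrable k μ := Integrable.of_integral_ne_zero (by simp [hk])
  calc a = ∫ y, k y * a ∂μ := by rw [integral_mul_const, hk, one_mul]
    _ ≤ ∫ y, k y * φ y ∂μ :=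
        integral_mono_ae (hki.mul_const a) hint <| by
          filter_upwards [hφa] with y hy
          exact mul_le_mul_of_nonneg_left hy (hk0 y)

end ProbabilityDensity

noncomputable def duhamel {X : Type*} [MeasurableSpace X] (μ : Measure X)
    (K : X → X → ℝ → ℝ) (f : X → ℝ → ℝ) (x : X) (t : ℝ) : ℝ :=
  ∫ s in Ioc 0 t, ∫ y, K x y (t - s) * f y s ∂μ

namespace duhamel

variable {X : Type*} [MeasurableSpace X] {μ : Measure X} {K : X → X → ℝ → ℝ} {f : X → ℝ → ℝ}

lemma measurable_integrand (hK : Measurable fun q : X × X × ℝ => K q.1 q.2.1 q.2.2)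
    (hf : Measurable fun q : X × ℝ => f q.1 q.2) :
    Measurable fun r : ((X × ℝ) × ℝ) × X => K r.1.1.1 r.2 (r.1.1.2 - r.1.2) * f r.2 r.1.2 :=
  (hK.comp (by fun_prop : Measurable fun r : ((X × ℝ) × ℝ) × X =>
    (r.1.1.1, r.2, r.1.1.2 - r.1.2))).mul
    (hf.comp (by fun_prop : Measurable fun r : ((X × ℝ) × ℝ) × X => (r.2, r.1.2)))

lemma stronglyMeasurable_inner [SFinite μ]
    (hK : Measurable fun q : X × X × ℝ => K q.1 q.2.1 q.2.2)
    (hf : Measurable fun q : X × ℝ => f q.1 q.2) :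
    StronglyMeasurable fun r : (X × ℝ) × ℝ => ∫ y, K r.1.1 y (r.1.2 - r.2) * f y r.2 ∂μ :=
  (measurable_integrand hK hf).stronglyMeasurable.integral_prod_right'

lemma measurable [SFinite μ] (hK : Measurable fun q : X × X × ℝ => K q.1 q.2.1 q.2.2)
    (hf : Measurable fun q : X × ℝ => f q.1 q.2) :
    Measurable fun q : X × ℝ => duhamel μ K f q.1 q.2 := by
  have hS : MeasurableSet {r : (X × ℝ) × ℝ | r.2 ∈ Ioc 0 r.1.2} :=
    (measurableSet_lt measurable_const measurable_snd).inter
      (measurableSet_le measurable_snd (measurable_snd.comp measurable_fst))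
  have hind := ((stronglyMeasurable_inner (μ := μ) hK hf).indicator hS).integral_prod_right'
    (ν := volume)
  convert hind.measurable using 2 with q
  rw [duhamel, ← integral_indicator measurableSet_Ioc]
  rfl

variable {x : X} {t : ℝ} {p : ℝ → ℝ}

lemma ae_integrable_and_le (hf : Measurable fun q : X × ℝ => f q.1 q.2) (hK0 : ∀ y τ, 0 ≤ K x y τ)
    (hK1 : ∀ᵐ s ∂volume.restrict (Ioc 0 t), ∫ y, K x y (t - s) ∂μ = 1)
    (hf0 : ∀ y s, 0 ≤ f y s) (hfp : ∀ᵐ s ∂volume.restrict (Ioc 0 t), ∀ᵐ y ∂μ, f y s ≤ p s) :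
    ∀ᵐ s ∂volume.restrict (Ioc 0 t), Integrable (fun y => K x y (t - s) * f y s) μ ∧
      ∫ y, K x y (t - s) * f y s ∂μ ≤ p s := by
  filter_upwards [hK1, hfp] with s hs1 hsp
  have hint := integrable_mul_of_integral_eq_one hs1
    (hf.comp (measurable_id.prodMk measurable_const)).aestronglyMeasurable (hf0 · s) hsp
  exact ⟨hint, integral_mul_le_of_integral_eq_one (hK0 · _) hs1 hint hsp⟩

lemma integrableOn_inner [SFinite μ] (hK : Measurable fun q : X × X × ℝ => K q.1 q.2.1 q.2.2)
    (hf : Measurable fun q : X × ℝ => f q.1 q.2) (hK0 : ∀ y τ, 0 ≤ K x y τ)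
    (hK1 : ∀ᵐ s ∂volume.restrict (Ioc 0 t), ∫ y, K x y (t - s) ∂μ = 1)
    (hf0 : ∀ y s, 0 ≤ f y s) (hfp : ∀ᵐ s ∂volume.restrict (Ioc 0 t), ∀ᵐ y ∂μ, f y s ≤ p s)
    (hp : IntegrableOn p (Ioc 0 t)) :
    IntegrableOn (fun s => ∫ y, K x y (t - s) * f y s ∂μ) (Ioc 0 t) := by
  refine hp.mono' ((stronglyMeasurable_inner hK hf).comp_measurable
    (by fun_prop : Measurable fun s : ℝ => ((x, t), s))).aestronglyMeasurable ?_
  filter_upwards [ae_integrable_and_le hf hK0 hK1 hf0 hfp] with s hs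
  rw [Real.norm_of_nonneg (integral_nonneg fun y => mul_nonneg (hK0 _ _) (hf0 _ _))]
  exact hs.2

lemma le_setIntegral [SFinite μ] (hK : Measurable fun q : X × X × ℝ => K q.1 q.2.1 q.2.2)
    (hf : Measurable fun q : X × ℝ => f q.1 q.2) (hK0 : ∀ y τ, 0 ≤ K x y τ)
    (hK1 : ∀ᵐ s ∂volume.restrict (Ioc 0 t), ∫ y, K x y (t - s) ∂μ = 1)
    (hf0 : ∀ y s, 0 ≤ f y s) (hfp : ∀ᵐ s ∂volume.restrict (Ioc 0 t), ∀ᵐ y ∂μ, f y s ≤ p s)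
    (hp : IntegrableOn p (Ioc 0 t)) :
    duhamel μ K f x t ≤ ∫ s in Ioc 0 t, p s :=
  integral_mono_ae (integrableOn_inner hK hf hK0 hK1 hf0 hfp hp) hp <| by
    filter_upwards [ae_integrable_and_le hf hK0 hK1 hf0 hfp] with s hs using hs.2

lemma le_of_le_mul_density [SFinite μ] (hK : Measurable fun q : X × X × ℝ => K q.1 q.2.1 q.2.2)
    (hf : Measurable fun q : X × ℝ => f q.1 q.2) (hK0 : ∀ y τ, 0 ≤ K x y τ)
    (hK1 : ∀ᵐ s ∂volume.restrict (Ioc 0 t), ∫ y, K x y (t - s) ∂μ = 1)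
    (hf0 : ∀ y s, 0 ≤ f y s) {M : ℝ} (hM : 0 ≤ M)
    (hfp : ∀ᵐ s ∂volume.restrict (Ioc 0 t), ∀ᵐ y ∂μ, f y s ≤ p s * M)
    (hp : IntegrableOn p (Ioi 0)) (hp0 : ∀ s ∈ Ioi 0, 0 ≤ p s) (hp1 : ∫ s in Ioi 0, p s = 1) :
    duhamel μ K f x t ≤ M := by
  have hpM : IntegrableOn (fun s => p s * M) (Ioi 0) := hp.mul_const M
  calc duhamel μ K f x t ≤ ∫ s in Ioc 0 t, p s * M :=
        le_setIntegral hK hf hK0 hK1 hf0 hfp (hpM.mono_set Ioc_subset_Ioi_self)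
    _ ≤ ∫ s in Ioi 0, p s * M :=
        setIntegral_mono_set hpM ((ae_restrict_iff' measurableSet_Ioi).2 (ae_of_all _
          fun s hs => mul_nonneg (hp0 s hs) hM)) Ioc_subset_Ioi_self.eventuallyLE
    _ = M := by rw [integral_mul_const, hp1, one_mul]

lemma mono [SFinite μ] {f' : X → ℝ → ℝ} (hK : Measurable fun q : X × X × ℝ => K q.1 q.2.1 q.2.2)
    (hf : Measurable fun q : X × ℝ => f q.1 q.2) (hK0 : ∀ y τ, 0 ≤ K x y τ)
    (hK1 : ∀ᵐ s ∂volume.restrict (Ioc 0 t), ∫ y, K x y (t - s) ∂μ = 1)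
    (hf0 : ∀ y s, 0 ≤ f y s) (hfp : ∀ᵐ s ∂volume.restrict (Ioc 0 t), ∀ᵐ y ∂μ, f y s ≤ p s)
    (hp : IntegrableOn p (Ioc 0 t)) (hf'0 : ∀ y s, 0 ≤ f' y s)
    (hf'f : ∀ᵐ s ∂volume.restrict (Ioc 0 t), ∀ᵐ y ∂μ, f' y s ≤ f y s) :
    duhamel μ K f' x t ≤ duhamel μ K f x t := by
  refine integral_mono_of_nonneg (ae_of_all _ fun s => integral_nonneg fun y =>
    mul_nonneg (hK0 _ _) (hf'0 _ _)) (integrableOn_inner hK hf hK0 hK1 hf0 hfp hp) ?_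
  filter_upwards [ae_integrable_and_le hf hK0 hK1 hf0 hfp, hf'f] with s hs hs'
  refine integral_mono_of_nonneg (ae_of_all _ fun y => mul_nonneg (hK0 _ _) (hf'0 _ _)) hs.1 ?_
  filter_upwards [hs'] with y hy using mul_le_mul_of_nonneg_left hy (hK0 _ _)

lemma setIntegral_le [SFinite μ] (hK : Measurable fun q : X × X × ℝ => K q.1 q.2.1 q.2.2)
    (hf : Measurable fun q : X × ℝ => f q.1 q.2) (hK0 : ∀ y τ, 0 ≤ K x y τ)
    (hK1 : ∀ᵐ s ∂volume.restrict (Ioc 0 t), ∫ y, K x y (t - s) ∂μ = 1)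
    (hf0 : ∀ y s, 0 ≤ f y s) (hfp : ∀ᵐ s ∂volume.restrict (Ioc 0 t), ∀ᵐ y ∂μ, f y s ≤ p s)
    (hp : IntegrableOn p (Ioc 0 t)) {S : Set ℝ} (hS : S ⊆ Ioc 0 t) {q : ℝ → ℝ}
    (hq0 : ∀ᵐ s ∂volume.restrict S, 0 ≤ q s)
    (hqf : ∀ᵐ s ∂volume.restrict S, ∀ᵐ y ∂μ, q s ≤ f y s) :
    ∫ s in S, q s ≤ duhamel μ K f x t := by
  have hinner := integrableOn_inner hK hf hK0 hK1 hf0 hfp hp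
  calc ∫ s in S, q s ≤ ∫ s in S, ∫ y, K x y (t - s) * f y s ∂μ := by
        refine integral_mono_of_nonneg hq0 (hinner.mono_set hS) ?_
        filter_upwards [ae_mono (Measure.restrict_mono hS le_rfl)
          (hK1.and (ae_integrable_and_le hf hK0 hK1 hf0 hfp)), hqf] with s hs hsq
        exact le_integral_mul_of_integral_eq_one (hK0 · _) hs.1 hs.2.1 hsq
    _ ≤ duhamel μ K f x t :=
        setIntegral_mono_set hinner (ae_of_all _ fun s => integral_nonneg fun y =>
          mul_nonneg (hK0 _ _) (hf0 _ _)) hS.eventuallyLE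

lemma nonneg (hK0 : ∀ y τ, 0 ≤ K x y τ) (hf0 : ∀ y s, 0 ≤ f y s) : 0 ≤ duhamel μ K f x t :=
  integral_nonneg fun _ => integral_nonneg fun _ => mul_nonneg (hK0 _ _) (hf0 _ _)

lemma const_mul (σ : ℝ) : duhamel μ K (fun y s => σ * f y s) x t = σ * duhamel μ K f x t := by
  simp_rw [duhamel, mul_left_comm _ σ, integral_const_mul]

lemma sandwich [SFinite μ] {f f' : X → ℝ → ℝ} {σ : ℝ}
    (hK : Measurable fun q : X × X × ℝ => K q.1 q.2.1 q.2.2) (hK0 : ∀ y τ, 0 ≤ K x y τ)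
    (hK1 : ∀ᵐ s ∂volume.restrict (Ioc 0 t), ∫ y, K x y (t - s) ∂μ = 1)
    (hf : Measurable fun q : X × ℝ => f q.1 q.2) (hf0 : ∀ y s, 0 ≤ f y s)
    (hfp : ∀ᵐ s ∂volume.restrict (Ioc 0 t), ∀ᵐ y ∂μ, f y s ≤ p s)
    (hp : IntegrableOn p (Ioc 0 t))
    (hf' : Measurable fun q : X × ℝ => f' q.1 q.2) (hf'0 : ∀ y s, 0 ≤ f' y s) (hσ : 0 ≤ σ)
    (hσf : ∀ᵐ s ∂volume.restrict (Ioc 0 t), ∀ᵐ y ∂μ, σ * f y s ≤ f' y s)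
    (hf'f : ∀ᵐ s ∂volume.restrict (Ioc 0 t), ∀ᵐ y ∂μ, f' y s ≤ f y s) :
    σ * duhamel μ K f x t ≤ duhamel μ K f' x t ∧ duhamel μ K f' x t ≤ duhamel μ K f x t := by
  have hf'p : ∀ᵐ s ∂volume.restrict (Ioc 0 t), ∀ᵐ y ∂μ, f' y s ≤ p s := by
    filter_upwards [hfp, hf'f] with s hs hs'
    filter_upwards [hs, hs'] with y hy hy' using hy'.trans hy
  rw [← const_mul]
  exact ⟨mono hK hf' hK0 hK1 hf'0 hf'p hp (fun y s => mul_nonneg hσ (hf0 y s)) hσf,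
    mono hK hf hK0 hK1 hf0 hfp hp hf'0 hf'f⟩

end duhamel

def reactionTerm {X : Type*} (h g : X → ℝ → ℝ) (G : ℝ → ℝ) (W : X → ℝ → ℝ) (y : X) (s : ℝ) : ℝ :=
  h y s * G (W y s + g y s)

section reactionTerm

variable {X : Type*} {h g W : X → ℝ → ℝ} {G : ℝ → ℝ}

lemma reactionTerm_nonneg (hh0 : ∀ y s, 0 ≤ h y s) (hG0 : ∀ u, 0 ≤ u → 0 ≤ G u)
    (hWg : ∀ y s, 0 ≤ W y s + g y s) (y : X) (s : ℝ) : 0 ≤ reactionTerm h g G W y s :=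
  mul_nonneg (hh0 y s) (hG0 _ (hWg y s))

lemma measurable_reactionTerm [MeasurableSpace X] (hh : Measurable fun q : X × ℝ => h q.1 q.2)
    (hW : Measurable fun q : X × ℝ => W q.1 q.2) (hg : Measurable fun q : X × ℝ => g q.1 q.2)
    (hG : MonotoneOn G (Ici 0)) (hWg : ∀ y s, 0 ≤ W y s + g y s) :
    Measurable fun q : X × ℝ => reactionTerm h g G W q.1 q.2 :=
  hh.mul (hG.measurable_comp_of_nonneg (hW.add hg) fun q => hWg q.1 q.2)

variable {y : X} {s : ℝ}

lemma reactionTerm_le_mul (hG : MonotoneOn G (Ici 0)) (hG0 : ∀ u, 0 ≤ u → 0 ≤ G u)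
    (hh0 : 0 ≤ h y s) {b u : ℝ} (hb : h y s ≤ b) (hWg0 : 0 ≤ W y s + g y s)
    (hu : W y s + g y s ≤ u) : reactionTerm h g G W y s ≤ b * G u :=
  mul_le_mul hb (hG hWg0 (hWg0.trans hu) hu) (hG0 _ hWg0) (hh0.trans hb)

lemma mul_le_reactionTerm (hG : MonotoneOn G (Ici 0)) (hh0 : 0 ≤ h y s) {a u : ℝ}
    (ha : a ≤ h y s) (hu0 : 0 ≤ u) (hGu : 0 ≤ G u) (hu : u ≤ W y s + g y s) :
    a * G u ≤ reactionTerm h g G W y s :=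
  mul_le_mul ha (hG hu0 (hu0.trans hu) hu) hGu hh0

end reactionTerm

section Iteration

variable {X : Type*} [MeasurableSpace X] {μ : Measure X} {K : X → X → ℝ → ℝ}
  {h g W : X → ℝ → ℝ} {G : ℝ → ℝ} {p₂ : ℝ → ℝ} {β ξ : ℝ}

lemma ae_reactionTerm_le (hG : MonotoneOn G (Ici 0)) (hG0 : ∀ u, 0 ≤ u → 0 ≤ G u)
    (hh0 : ∀ y s, 0 ≤ h y s) (hWg : ∀ y s, 0 ≤ W y s + g y s) (hξβ : G ξ + β = ξ)
    (hdata : ∀ᵐ s ∂volume.restrict (Ioi 0), ∀ᵐ y ∂μ, g y s ≤ β ∧ h y s ≤ p₂ s)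
    (hW : ∀ᵐ y ∂μ, ∀ s, W y s ≤ G ξ) (t : ℝ) :
    ∀ᵐ s ∂volume.restrict (Ioc 0 t), ∀ᵐ y ∂μ, reactionTerm h g G W y s ≤ p₂ s * G ξ := by
  filter_upwards [ae_mono (Measure.restrict_mono Ioc_subset_Ioi_self le_rfl) hdata] with s hs
  filter_upwards [hs, hW] with y hy hWy
  exact reactionTerm_le_mul hG hG0 (hh0 y s) hy.2 (hWg y s) (by linarith [hWy s])

lemma ae_mul_le_reactionTerm {p₁ : ℝ → ℝ} {S : Set ℝ} (hSm : MeasurableSet S) (hS : S ⊆ Ioi 0)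
    (hG : MonotoneOn G (Ici 0)) (hh0 : ∀ y s, 0 ≤ h y s)
    (hdata : ∀ᵐ s ∂volume.restrict (Ioi 0), ∀ᵐ y ∂μ, p₁ s ≤ h y s) {u : ℝ} (hu0 : 0 ≤ u)
    (hGu : 0 ≤ G u) (hu : ∀ y, ∀ s ∈ S, u ≤ W y s + g y s) :
    ∀ᵐ s ∂volume.restrict S, ∀ᵐ y ∂μ, p₁ s * G u ≤ reactionTerm h g G W y s := by
  filter_upwards [ae_mono (Measure.restrict_mono hS le_rfl) hdata, ae_restrict_mem hSm]
    with s hs hsS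
  filter_upwards [hs] with y hy using mul_le_reactionTerm hG (hh0 y s) hy hu0 hGu (hu y s hsS)

lemma first_iterate_bounds [SFinite μ] {p₁ : ℝ → ℝ} {T₀ β₀ : ℝ}
    (hK : Measurable fun q : X × X × ℝ => K q.1 q.2.1 q.2.2) (hK0 : ∀ x y τ, 0 ≤ K x y τ)
    (hK1 : ∀ᵐ x ∂μ, ∀ t, ∀ᵐ s ∂volume.restrict (Ioc 0 t), ∫ y, K x y (t - s) ∂μ = 1)
    (hh : Measurable fun q : X × ℝ => h q.1 q.2) (hh0 : ∀ y s, 0 ≤ h y s)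
    (hg : Measurable fun q : X × ℝ => g q.1 q.2) (hg0 : ∀ y s, 0 ≤ g y s)
    (hG : StrictMonoOn G (Ici 0)) (hG00 : G 0 = 0) (hG0 : ∀ u, 0 ≤ u → 0 ≤ G u)
    (hdata : ∀ᵐ s ∂volume.restrict (Ioi 0), ∀ᵐ y ∂μ, g y s ≤ β ∧ h y s ∈ Icc (p₁ s) (p₂ s))
    (hp₁ : ContinuousOn p₁ (Ioi 0)) (hp₁0 : ∀ s ∈ Ioi 0, 0 < p₁ s)
    (hp₂ : IntegrableOn p₂ (Ioi 0)) (hp₂0 : ∀ s ∈ Ioi 0, 0 ≤ p₂ s)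
    (hp₂1 : ∫ s in Ioi 0, p₂ s = 1) (hT₀ : 0 < T₀) (hβ₀ : 0 < β₀)
    (hgβ₀ : ∀ y s, 0 < s → s < T₀ → β₀ ≤ g y s) (hξ : 0 ≤ ξ) (hξβ : G ξ + β = ξ) :
    ∃ D > 0, ∀ᵐ y ∂μ, ∀ s, duhamel μ K (reactionTerm h g G fun _ _ => G ξ) y s ≤ G ξ ∧
      (0 < s → D ≤ duhamel μ K (reactionTerm h g G fun _ _ => G ξ) y s + g y s) := by
  set f := reactionTerm h g G fun _ _ => G ξ
  have hc : 0 ≤ G ξ := hG0 ξ hξ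
  have hcg : ∀ y s, 0 ≤ G ξ + g y s := fun y s => add_nonneg hc (hg0 y s)
  have hf := measurable_reactionTerm hh measurable_const hg hG.monotoneOn hcg
  have hf0 := reactionTerm_nonneg hh0 hG0 hcg
  have hfp := ae_reactionTerm_le hG.monotoneOn hG0 hh0 hcg hξβ
    (hdata.mono fun s hs => hs.mono fun y hy => ⟨hy.1, hy.2.2⟩) (ae_of_all _ fun _ _ => le_rfl)
  -- p₁ is only continuous on (0, ∞), so its positive mass is taken from a compact window
  set S := Ioo (T₀ / 2) T₀
  have hS : S ⊆ Ioi 0 := fun s hs => (half_pos hT₀).trans hs.1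
  have hcβ₀ : 0 < G ξ + β₀ := add_pos_of_nonneg_of_pos hc hβ₀
  have hGcβ₀ : 0 < G (G ξ + β₀) := by simpa [hG00] using hG self_mem_Ici hcβ₀.le hcβ₀
  have hm : 0 < ∫ s in S, p₁ s * G (G ξ + β₀) := by
    rw [integral_mul_const]
    exact mul_pos (setIntegral_Ioo_pos_of_continuousOn (half_lt_self hT₀)
      (hp₁.mono fun s hs => (half_pos hT₀).trans_le hs.1) fun s hs => hp₁0 s (hS hs)) hGcβ₀
  set m := ∫ s in S, p₁ s * G (G ξ + β₀)
  have hm0 : ∀ᵐ s ∂volume.restrict S, 0 ≤ p₁ s * G (G ξ + β₀) := by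
    filter_upwards [ae_restrict_mem measurableSet_Ioo] with s hs
    exact mul_nonneg (hp₁0 s (hS hs)).le hGcβ₀.le
  have hmf : ∀ᵐ s ∂volume.restrict S, ∀ᵐ y ∂μ, p₁ s * G (G ξ + β₀) ≤ f y s :=
    ae_mul_le_reactionTerm measurableSet_Ioo hS hG.monotoneOn hh0
      (hdata.mono fun s hs => hs.mono fun y hy => hy.2.1) hcβ₀.le hGcβ₀.le
      fun y s hs => by linarith [hgβ₀ y s (hS hs) hs.2]
  refine ⟨min β₀ m, lt_min hβ₀ hm, ?_⟩
  filter_upwards [hK1] with y hy s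
  refine ⟨duhamel.le_of_le_mul_density hK hf (hK0 y) (hy s) hf0 hc (hfp s) hp₂ hp₂0 hp₂1,
    fun hs => ?_⟩
  rcases lt_or_ge s T₀ with hsT | hsT
  · linarith [min_le_left β₀ m, hgβ₀ y s hs hsT, duhamel.nonneg (μ := μ) (hK0 y) hf0 (t := s)]
  · have hmV : m ≤ duhamel μ K f y s := duhamel.setIntegral_le hK hf (hK0 y) (hy s) hf0 (hfp s)
      ((hp₂.mono_set Ioc_subset_Ioi_self).mul_const _) (fun r hr => ⟨hS hr, hr.2.le.trans hsT⟩)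
      hm0 hmf
    linarith [min_le_right β₀ m, hg0 y s]

lemma duhamel_reactionTerm_sandwich [SFinite μ] {D σ : ℝ}
    (hK : Measurable fun q : X × X × ℝ => K q.1 q.2.1 q.2.2) (hK0 : ∀ x y τ, 0 ≤ K x y τ)
    (hK1 : ∀ᵐ x ∂μ, ∀ t, ∀ᵐ s ∂volume.restrict (Ioc 0 t), ∫ y, K x y (t - s) ∂μ = 1)
    (hh : Measurable fun q : X × ℝ => h q.1 q.2) (hh0 : ∀ y s, 0 ≤ h y s)
    (hg : Measurable fun q : X × ℝ => g q.1 q.2) (hg0 : ∀ y s, 0 ≤ g y s)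
    (hG : MonotoneOn G (Ici 0)) (hG0 : ∀ u, 0 ≤ u → 0 ≤ G u)
    (hdata : ∀ᵐ s ∂volume.restrict (Ioi 0), ∀ᵐ y ∂μ, g y s ≤ β ∧ h y s ≤ p₂ s)
    (hp₂ : IntegrableOn p₂ (Ioi 0)) (hξ : 0 ≤ ξ) (hξβ : G ξ + β = ξ)
    (hW : Measurable fun q : X × ℝ => W q.1 q.2) (hW0 : ∀ y s, 0 ≤ W y s)
    (hWc : ∀ᵐ y ∂μ, ∀ s, W y s ≤ G ξ) (hD : 0 ≤ D)
    (hWD : ∀ᵐ y ∂μ, ∀ s, 0 < s → D ≤ W y s + g y s) (hσ : 0 ≤ σ) (hσD : σ * G ξ ≤ G D) :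
    ∀ᵐ x ∂μ, ∀ t,
      σ * duhamel μ K (reactionTerm h g G fun _ _ => G ξ) x t ≤
          duhamel μ K (reactionTerm h g G W) x t ∧
        duhamel μ K (reactionTerm h g G W) x t ≤
          duhamel μ K (reactionTerm h g G fun _ _ => G ξ) x t := by
  have hcg : ∀ y s, 0 ≤ G ξ + g y s := fun y s => add_nonneg (hG0 ξ hξ) (hg0 y s)
  have hWg : ∀ y s, 0 ≤ W y s + g y s := fun y s => add_nonneg (hW0 y s) (hg0 y s)
  filter_upwards [hK1] with x hx t
  refine duhamel.sandwich hK (hK0 x) (hx t) (measurable_reactionTerm hh measurable_const hg hG hcg)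
    (reactionTerm_nonneg hh0 hG0 hcg)
    (ae_reactionTerm_le hG hG0 hh0 hcg hξβ hdata (ae_of_all _ fun _ _ => le_rfl) t)
    ((hp₂.mono_set Ioc_subset_Ioi_self).mul_const _) (measurable_reactionTerm hh hW hg hG hWg)
    (reactionTerm_nonneg hh0 hG0 hWg) hσ ?_ ?_
  · filter_upwards [ae_mono (Measure.restrict_mono Ioc_subset_Ioi_self le_rfl) hdata,
      ae_restrict_mem measurableSet_Ioc] with s hs hst
    filter_upwards [hs, hWD] with y hy hWDy
    calc σ * reactionTerm h g G (fun _ _ => G ξ) y s ≤ σ * (h y s * G ξ) :=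
          mul_le_mul_of_nonneg_left (reactionTerm_le_mul hG hG0 (hh0 y s) le_rfl (hcg y s)
            (by linarith [hy.1])) hσ
      _ ≤ h y s * G D := by nlinarith [hh0 y s]
      _ ≤ reactionTerm h g G W y s :=
          mul_le_reactionTerm hG (hh0 y s) le_rfl hD (hG0 D hD) (hWDy s hst.1)
  · filter_upwards with s
    filter_upwards [hWc] with y hy
    exact reactionTerm_le_mul hG hG0 (hh0 y s) le_rfl (hWg y s) (by linarith [hy s])

lemma exists_second_iterate_sandwich [SFinite μ] {p₁ : ℝ → ℝ} {T₀ β₀ : ℝ}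
    (hK : Measurable fun q : X × X × ℝ => K q.1 q.2.1 q.2.2) (hK0 : ∀ x y τ, 0 ≤ K x y τ)
    (hK1 : ∀ᵐ x ∂μ, ∀ t, ∀ᵐ s ∂volume.restrict (Ioc 0 t), ∫ y, K x y (t - s) ∂μ = 1)
    (hh : Measurable fun q : X × ℝ => h q.1 q.2) (hh0 : ∀ y s, 0 ≤ h y s)
    (hg : Measurable fun q : X × ℝ => g q.1 q.2) (hg0 : ∀ y s, 0 ≤ g y s)
    (hG : StrictMonoOn G (Ici 0)) (hG00 : G 0 = 0) (hG0 : ∀ u, 0 ≤ u → 0 ≤ G u)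
    (hdata : ∀ᵐ s ∂volume.restrict (Ioi 0), ∀ᵐ y ∂μ, g y s ≤ β ∧ h y s ∈ Icc (p₁ s) (p₂ s))
    (hp₁ : ContinuousOn p₁ (Ioi 0)) (hp₁0 : ∀ s ∈ Ioi 0, 0 < p₁ s)
    (hp₂ : IntegrableOn p₂ (Ioi 0)) (hp₂0 : ∀ s ∈ Ioi 0, 0 ≤ p₂ s)
    (hp₂1 : ∫ s in Ioi 0, p₂ s = 1) (hT₀ : 0 < T₀) (hβ₀ : 0 < β₀)
    (hgβ₀ : ∀ y s, 0 < s → s < T₀ → β₀ ≤ g y s) (hξ : 0 < ξ) (hξβ : G ξ + β = ξ) :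
    let V₁ := duhamel μ K (reactionTerm h g G fun _ _ => G ξ)
    let V₂ := duhamel μ K (reactionTerm h g G V₁)
    ∃ σ ∈ Ioo (0:ℝ) 1, ∀ᵐ x ∂μ, ∀ t, σ * V₁ x t ≤ V₂ x t ∧ V₂ x t ≤ V₁ x t := by
  intro V₁ V₂
  obtain ⟨D, hD, hV₁⟩ := first_iterate_bounds hK hK0 hK1 hh hh0 hg hg0 hG hG00 hG0 hdata hp₁ hp₁0
    hp₂ hp₂0 hp₂1 hT₀ hβ₀ hgβ₀ hξ.le hξβ
  have hc : 0 < G ξ := by simpa [hG00] using hG self_mem_Ici hξ.le hξ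
  have hGD : 0 < G D := by simpa [hG00] using hG self_mem_Ici hD.le hD
  have hcg : ∀ y s, 0 ≤ G ξ + g y s := fun y s => add_nonneg hc.le (hg0 y s)
  -- capping at 1/2 gives σ < 1 without having to compare D with ξ
  set σ := min (G D / G ξ) (1 / 2)
  refine ⟨σ, ⟨lt_min (div_pos hGD hc) one_half_pos, (min_le_right _ _).trans_lt one_half_lt_one⟩,
    ?_⟩
  exact duhamel_reactionTerm_sandwich hK hK0 hK1 hh hh0 hg hg0 hG.monotoneOn hG0
    (hdata.mono fun s hs => hs.mono fun y hy => ⟨hy.1, hy.2.2⟩) hp₂ hξ.le hξβ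
    (duhamel.measurable hK (measurable_reactionTerm hh measurable_const hg hG.monotoneOn hcg))
    (fun y s => duhamel.nonneg (hK0 y) (reactionTerm_nonneg hh0 hG0 hcg))
    (hV₁.mono fun y hy s => (hy s).1) hD.le (hV₁.mono fun y hy s => (hy s).2)
    (le_min (div_pos hGD hc).le one_half_pos.le) ((le_div_iff₀ hc).1 (min_le_left _ _))

end Iteration

theorem second_iterate_sandwich_stochastic_general
    {X : Type*} [MeasurableSpace X] (μ : Measure X) [SigmaFinite μ]
    (K : X → X → ℝ → ℝ) (g h : X → ℝ → ℝ) (G : ℝ → ℝ)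
    (p₁ p₂ : ℝ → ℝ) (β ξ T₀ β₀ : ℝ)
    (hK_meas : Measurable fun q : X × X × ℝ => K q.1 q.2.1 q.2.2)
    (hK_nonneg : ∀ x y t, 0 ≤ K x y t)
    (hK_stoch : ∀ᵐ x ∂μ, ∀ᵐ t ∂(volume.restrict (Ioi (0:ℝ))),
      (∫ y, K x y t ∂μ) = 1)
    (hg_meas : Measurable fun q : X × ℝ => g q.1 q.2)
    (hg_nonneg : ∀ x t, 0 ≤ g x t)
    (hg_bdd : MemLp (fun q : X × ℝ => g q.1 q.2) ⊤
      (μ.prod (volume.restrict (Ioi (0:ℝ)))))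
    (hβ : β = (eLpNorm (fun q : X × ℝ => g q.1 q.2) ⊤
      (μ.prod (volume.restrict (Ioi (0:ℝ))))).toReal)
    (hT₀ : 0 < T₀) (hβ₀_pos : 0 < β₀)
    (hβ₀ : ∀ x t, 0 < t → t < T₀ → β₀ ≤ g x t)
    (hh_meas : Measurable fun q : X × ℝ => h q.1 q.2)
    (hh_nonneg : ∀ x t, 0 ≤ h x t)
    (hG_zero : G 0 = 0)
    (hG_nonneg : ∀ u, 0 ≤ u → 0 ≤ G u)
    (hG_mono : StrictMonoOn G (Ici 0))
    (hp₁_cont : ContinuousOn p₁ (Ioi 0))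
    (hp₁_pos : ∀ t ∈ Ioi (0:ℝ), 0 < p₁ t) (hp₂_pos : ∀ t ∈ Ioi (0:ℝ), 0 < p₂ t)
    (hp₂_int : (∫ t in Ioi (0:ℝ), p₂ t) = 1)
    (hp_bound : ∀ᵐ x ∂μ, ∀ᵐ t ∂(volume.restrict (Ioi (0:ℝ))),
      p₁ t ≤ h x t ∧ h x t ≤ p₂ t)
    (hξ_pos : 0 < ξ) (hξ_eq : ξ - G ξ = β)
    (V : ℕ → X → ℝ → ℝ)
    (hV0 : ∀ x t, V 0 x t = ξ - β)
    (hVsucc : ∀ m x t, V (m + 1) x t =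
      ∫ s in Ioc (0:ℝ) t, ∫ y, K x y (t - s) * (h y s * G (V m y s + g y s)) ∂μ) :
    ∃ σs ∈ Ioo (0:ℝ) 1,
      ∀ᵐ q ∂(μ.prod (volume.restrict (Ioi (0:ℝ)))),
        σs * V 1 q.1 q.2 ≤ V 2 q.1 q.2 ∧ V 2 q.1 q.2 ≤ V 1 q.1 q.2 := by
  have hK1 : ∀ᵐ x ∂μ, ∀ t, ∀ᵐ s ∂volume.restrict (Ioc 0 t), ∫ y, K x y (t - s) ∂μ = 1 :=
    hK_stoch.mono fun x hx => ae_restrict_Ioc_sub_of_ae_restrict_Ioi hx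
  have hp₂ : IntegrableOn p₂ (Ioi 0) := Integrable.of_integral_ne_zero (hp₂_int ▸ one_ne_zero)
  have hdata : ∀ᵐ s ∂volume.restrict (Ioi 0), ∀ᵐ y ∂μ, g y s ≤ β ∧ h y s ∈ Icc (p₁ s) (p₂ s) := by
    filter_upwards [ae_ae_swap_of_ae_prod (hβ ▸ ae_le_toReal_eLpNorm_top hg_bdd),
      ae_ae_comm_of_mem_Icc (hp₁_cont.aemeasurable measurableSet_Ioi) hp₂.aemeasurable hh_meas
        hp_bound] with s hgs hhs
    filter_upwards [hgs, hhs] with y using And.intro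
  have hξβ : G ξ + β = ξ := by linarith
  have hV : ∀ m, V (m + 1) = duhamel μ K (reactionTerm h g G (V m)) := fun m => by
    ext x t; exact hVsucc m x t
  have hV1 : V 1 = duhamel μ K (reactionTerm h g G fun _ _ => G ξ) := by
    rw [hV]; congr; ext; rw [hV0]; linarith
  have hV2 : V 2 = duhamel μ K (reactionTerm h g G (V 1)) := hV 1
  obtain ⟨σ, hσ, hsandwich⟩ := exists_second_iterate_sandwich hK_meas hK_nonneg hK1 hh_meas
    hh_nonneg hg_meas hg_nonneg hG_mono hG_zero hG_nonneg hdata hp₁_cont hp₁_pos hp₂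
    (fun s hs => (hp₂_pos s hs).le) hp₂_int hT₀ hβ₀_pos hβ₀ hξ_pos hξβ
  rw [← hV1, ← hV2] at hsandwich
  exact ⟨σ, hσ, (Measure.quasiMeasurePreserving_fst.ae hsandwich).mono fun q hq => hq q.2⟩

/-- **Sandwich estimate for the second iterate, stochastic case
(inequality (3.23)).** With `V 0 = ξ - β` and the iteration
`V (m+1)(x,t) = ∫₀ᵗ ∫_X K(x,y;t-s) h(y,s) G(V m (y,s)+g(y,s)) dμ ds`,
there exists `σ* ∈ (0,1)` such that `σ* V 1 ≤ V 2 ≤ V 1` a.e. -/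
theorem second_iterate_sandwich_stochastic
    {X : Type*} [MeasurableSpace X] (μ : Measure X) [SigmaFinite μ]
    (K : X → X → ℝ → ℝ) (g h : X → ℝ → ℝ) (G : ℝ → ℝ)
    (p₁ p₂ : ℝ → ℝ) (β ξ T₀ β₀ ratLim : ℝ)
    (hK_meas : Measurable fun q : X × X × ℝ => K q.1 q.2.1 q.2.2)
    (hK_nonneg : ∀ x y t, 0 ≤ K x y t)
    (hK_stoch : ∀ᵐ x ∂μ, ∀ᵐ t ∂(volume.restrict (Ioi (0:ℝ))),
      (∫ y, K x y t ∂μ) = 1)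
    (hg_meas : Measurable fun q : X × ℝ => g q.1 q.2)
    (hg_nonneg : ∀ x t, 0 ≤ g x t)
    (hg_bdd : MemLp (fun q : X × ℝ => g q.1 q.2) ⊤
      (μ.prod (volume.restrict (Ioi (0:ℝ)))))
    (hβ : β = (eLpNorm (fun q : X × ℝ => g q.1 q.2) ⊤
      (μ.prod (volume.restrict (Ioi (0:ℝ))))).toReal)
    (hT₀ : 0 < T₀) (hβ₀_pos : 0 < β₀)
    (hβ₀ : ∀ x t, 0 < t → t < T₀ → β₀ ≤ g x t)
    (hh_meas : Measurable fun q : X × ℝ => h q.1 q.2)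
    (hh_nonneg : ∀ x t, 0 ≤ h x t)
    (hG_cont : ContinuousOn G (Ici 0))
    (hG_zero : G 0 = 0)
    (hG_nonneg : ∀ u, 0 ≤ u → 0 ≤ G u)
    (hG_mono : StrictMonoOn G (Ici 0))
    (hG_conc : ConcaveOn ℝ (Ici 0) G)
    (hp₁_cont : ContinuousOn p₁ (Ioi 0)) (hp₂_cont : ContinuousOn p₂ (Ioi 0))
    (hp₁_pos : ∀ t ∈ Ioi (0:ℝ), 0 < p₁ t) (hp₂_pos : ∀ t ∈ Ioi (0:ℝ), 0 < p₂ t)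
    (hp_ne : ∃ t ∈ Ioi (0:ℝ), p₁ t ≠ p₂ t)
    (hp₂_int : (∫ t in Ioi (0:ℝ), p₂ t) = 1)
    (hp_bound : ∀ᵐ x ∂μ, ∀ᵐ t ∂(volume.restrict (Ioi (0:ℝ))),
      p₁ t ≤ h x t ∧ h x t ≤ p₂ t)
    (hrat_pos : 0 < ratLim)
    (hrat_lim : Tendsto (fun t => p₁ t / p₂ t) (nhdsWithin 0 (Ioi 0)) (nhds ratLim))
    (hξ_pos : 0 < ξ) (hξ_eq : ξ - G ξ = β)
    (V : ℕ → X → ℝ → ℝ)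
    (hV0 : ∀ x t, V 0 x t = ξ - β)
    (hVsucc : ∀ m x t, V (m + 1) x t =
      ∫ s in Ioc (0:ℝ) t, ∫ y, K x y (t - s) * (h y s * G (V m y s + g y s)) ∂μ) :
    ∃ σs ∈ Ioo (0:ℝ) 1,
      ∀ᵐ q ∂(μ.prod (volume.restrict (Ioi (0:ℝ)))),
        σs * V 1 q.1 q.2 ≤ V 2 q.1 q.2 ∧ V 2 q.1 q.2 ≤ V 1 q.1 q.2 :=
  second_iterate_sandwich_stochastic_general μ K g h G p₁ p₂ β ξ T₀ β₀ hK_meas hK_nonneg hK_stoch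
    hg_meas hg_nonneg hg_bdd hβ hT₀ hβ₀_pos hβ₀ hh_meas hh_nonneg hG_zero hG_nonneg hG_mono hp₁_cont
    hp₁_pos hp₂_pos hp₂_int hp_bound hξ_pos hξ_eq V hV0 hVsucc
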